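/- Let q ≥ 2, let G be a finite connected (q+1)-regular graph, and let ψ : V → ℝ be a real eigenfunction of A with eigenvalue λ ∈ (−2√q, 2√q); write λ = 2√q cos(s ln q) with s ∈ ℝ and set ε = q^{−1/2−is}, f(e) = ψ(t(e)) − εψ(o(e)), f*(e) = ψ(o(e)) − εψ(t(e)). Then for every m ≥ 1 and every K ∈ H_m: ⟨f*, K̂_B f⟩_{ℓ²(B)} = ⟨ψ, ((1−S)K)^_G ψ⟩_{ℓ²(V)} + ε·⟨ψ, (∇*K)^_G ψ⟩_{ℓ²(V)}, where ∇* : H_m → H_{m−1} is the adjoint of ∇ : H_{m−1} → H_m. -/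
import Mathlib

open Classical Finset

noncomputable section

def IsNB {V : Type} (G : SimpleGraph V) {k : ℕ} (ω : Fin (k + 1) → V) : Prop :=
  (∀ i j : Fin (k + 1), (j : ℕ) = (i : ℕ) + 1 → G.Adj (ω i) (ω j)) ∧
  (∀ i j : Fin (k + 1), (j : ℕ) = (i : ℕ) + 2 → ω i ≠ ω j)

def nbFinset {V : Type} [Fintype V] (G : SimpleGraph V) (k : ℕ) :
    Finset (Fin (k + 1) → V) :=
  Finset.univ.filter fun ω => IsNB G ω

def RegularOfDegree {V : Type} [Fintype V] (G : SimpleGraph V) (d : ℕ) : Prop :=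
  ∀ x : V, (Finset.univ.filter fun y => G.Adj x y).card = d

/-- The gradient `∇ : H_k → H_{k+1}`. -/
def grad {V : Type} (k : ℕ) (K : (Fin (k + 1) → V) → ℂ) : (Fin (k + 2) → V) → ℂ :=
  fun ω => K (fun i => ω i.succ) - K (fun i => ω i.castSucc)

/-- The transfer operator `S : H_k → H_k`. -/
def transferOp {V : Type} [Fintype V] (G : SimpleGraph V) (q k : ℕ)
    (K : (Fin (k + 1) → V) → ℂ) : (Fin (k + 1) → V) → ℂ :=
  fun ω => (1 / (q : ℂ)) *
    ∑ y : V, if G.Adj y (ω 0) ∧ y ≠ ω 1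
      then K (Fin.cons y fun i : Fin k => ω i.castSucc) else 0

/-- `ε = q^{-1/2 - i s}`. -/
def eps (q : ℕ) (s : ℝ) : ℂ :=
  (q : ℂ) ^ (-(1/2 : ℂ) - Complex.I * (s : ℂ))

/-! ### Auxiliary lemmas -/

lemma eps_eq (q : ℕ) (hq : 2 ≤ q) (s : ℝ) :
    eps q s = ((Real.sqrt q)⁻¹ : ℝ) * Complex.exp (-(↑(s * Real.log q)) * Complex.I) := by
  have hq0 : (0:ℝ) < q := by positivity
  have hqc : (q:ℂ) ≠ 0 := by exact_mod_cast hq0.ne'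
  rw [eps, Complex.cpow_def_of_ne_zero hqc, ← Complex.natCast_log]
  have hsplit : (↑(Real.log q) : ℂ) * (-(1/2 : ℂ) - Complex.I * (s : ℂ))
      = (↑(-(Real.log q)/2) : ℂ) + (-(↑(s * Real.log q)) * Complex.I) := by
    push_cast; ring
  rw [hsplit, Complex.exp_add, ← Complex.ofReal_exp]
  congr 2
  have h1 : Real.sqrt q = Real.exp (Real.log q / 2) := by
    rw [Real.sqrt_eq_rpow, Real.rpow_def_of_pos hq0]; ring_nf
  rw [h1, ← Real.exp_neg]; ring_nf

lemma eps_mul_conj (q : ℕ) (hq : 2 ≤ q) (s : ℝ) :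
    eps q s * (starRingEnd ℂ) (eps q s) = ((q : ℂ))⁻¹ := by
  have hq0 : (0:ℝ) < q := by positivity
  rw [eps_eq q hq s]
  rw [map_mul, ← Complex.exp_conj]
  simp only [Complex.conj_ofReal, map_mul, map_neg, Complex.conj_I]
  rw [mul_mul_mul_comm, ← Complex.exp_add]
  have : -(↑(s * Real.log q)) * Complex.I + -(↑(s * Real.log q) : ℂ) * -Complex.I = 0 := by ring
  rw [this, Complex.exp_zero, mul_one, ← Complex.ofReal_mul]
  rw [← Real.sqrt_inv, Real.mul_self_sqrt (by positivity)]
  norm_num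

lemma eps_add_conj (q : ℕ) (hq : 2 ≤ q) (s : ℝ) :
    eps q s + (starRingEnd ℂ) (eps q s)
      = 2 * ((Real.sqrt q)⁻¹ : ℝ) * (Real.cos (s * Real.log q) : ℂ) := by
  rw [eps_eq q hq s]
  rw [map_mul, ← Complex.exp_conj]
  simp only [Complex.conj_ofReal, map_mul, map_neg, Complex.conj_I]
  rw [← mul_add]
  have h2 : (-(↑(s * Real.log q) : ℂ)) * -Complex.I = (↑(s * Real.log q) : ℂ) * Complex.I := by ring
  rw [h2, Complex.exp_mul_I, Complex.exp_mul_I]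
  rw [Complex.cos_neg, Complex.sin_neg, ← Complex.ofReal_cos]
  ring

section Comb

variable {V : Type} (G : SimpleGraph V)

lemma isNB_iff {k : ℕ} (ω : Fin (k + 1) → V) :
    IsNB G ω ↔
      (∀ i : ℕ, (h : i + 1 ≤ k) → G.Adj (ω ⟨i, by omega⟩) (ω ⟨i+1, by omega⟩)) ∧
      (∀ i : ℕ, (h : i + 2 ≤ k) → ω ⟨i, by omega⟩ ≠ ω ⟨i+2, by omega⟩) := by
  constructor
  · rintro ⟨h1, h2⟩
    exact ⟨fun i h => h1 ⟨i, by omega⟩ ⟨i+1, by omega⟩ rfl,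
           fun i h => h2 ⟨i, by omega⟩ ⟨i+2, by omega⟩ rfl⟩
  · rintro ⟨h1, h2⟩
    constructor
    · intro i j hj
      have e2 : j = ⟨(i:ℕ)+1, by omega⟩ := Fin.ext hj
      rw [e2]
      exact h1 i (by omega)
    · intro i j hj
      have e2 : j = ⟨(i:ℕ)+2, by omega⟩ := Fin.ext hj
      rw [e2]
      exact h2 i (by omega)

lemma cons_mk_succ {k : ℕ} (y : V) (ω : Fin (k+1) → V) (i : ℕ) (h : i + 1 < k + 2) :
    (Fin.cons y ω : Fin (k+2) → V) ⟨i+1, h⟩ = ω ⟨i, by omega⟩ := by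
  have : (⟨i+1, h⟩ : Fin (k+2)) = Fin.succ ⟨i, by omega⟩ := rfl
  rw [this, Fin.cons_succ]

lemma isNB_cons {k : ℕ} (y : V) (ω : Fin (k + 2) → V) :
    IsNB G (Fin.cons y ω : Fin (k+3) → V) ↔ IsNB G ω ∧ G.Adj y (ω 0) ∧ y ≠ ω 1 := by
  rw [isNB_iff, isNB_iff]
  constructor
  · rintro ⟨h1, h2⟩
    refine ⟨⟨fun i h => ?_, fun i h => ?_⟩, ?_, ?_⟩
    · have := h1 (i+1) (by omega)
      rwa [cons_mk_succ, cons_mk_succ] at this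
    · have := h2 (i+1) (by omega)
      rwa [cons_mk_succ, cons_mk_succ] at this
    · have := h1 0 (by omega)
      rw [show ((⟨0, by omega⟩ : Fin (k+3))) = 0 from rfl, Fin.cons_zero] at this
      rwa [cons_mk_succ (h := by omega)] at this
    · have := h2 0 (by omega)
      rw [show ((⟨0, by omega⟩ : Fin (k+3))) = 0 from rfl, Fin.cons_zero] at this
      rw [show ((⟨0+2, by omega⟩ : Fin (k+3))) = (⟨1+1, by omega⟩ : Fin (k+3)) from rfl] at this
      rwa [cons_mk_succ (h := by omega)] at this
  · rintro ⟨⟨h1, h2⟩, ha, hn⟩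
    constructor
    · intro i h
      match i with
      | 0 =>
        rw [show ((⟨0, by omega⟩ : Fin (k+3))) = 0 from rfl, Fin.cons_zero,
          cons_mk_succ (h := by omega)]
        exact ha
      | i+1 =>
        rw [cons_mk_succ, show ((⟨i+1+1, by omega⟩ : Fin (k+3))) = ⟨(i+1)+1, by omega⟩ from rfl,
          cons_mk_succ (h := by omega)]
        exact h1 i (by omega)
    · intro i h
      match i with
      | 0 =>
        rw [show ((⟨0, by omega⟩ : Fin (k+3))) = 0 from rfl, Fin.cons_zero,
          show ((⟨0+2, by omega⟩ : Fin (k+3))) = ⟨1+1, by omega⟩ from rfl,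
          cons_mk_succ (h := by omega)]
        exact hn
      | i+1 =>
        rw [cons_mk_succ, show ((⟨i+1+2, by omega⟩ : Fin (k+3))) = ⟨(i+2)+1, by omega⟩ from rfl,
          cons_mk_succ (h := by omega)]
        exact h2 i (by omega)

lemma snoc_mk_lt {k : ℕ} (η : Fin (k+2) → V) (z : V) (i : ℕ) (h : i < k + 3) (h2 : i < k + 2) :
    (Fin.snoc η z : Fin (k+3) → V) ⟨i, h⟩ = η ⟨i, h2⟩ := by
  have : (⟨i, h⟩ : Fin (k+3)) = Fin.castSucc ⟨i, h2⟩ := rfl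
  rw [this, Fin.snoc_castSucc]

lemma snoc_mk_last {k : ℕ} (η : Fin (k+2) → V) (z : V) (h : k + 2 < k + 3) :
    (Fin.snoc η z : Fin (k+3) → V) ⟨k+2, h⟩ = z := by
  have : (⟨k+2, h⟩ : Fin (k+3)) = Fin.last (k+2) := rfl
  rw [this, Fin.snoc_last]

lemma isNB_snoc {k : ℕ} (z : V) (η : Fin (k + 2) → V) :
    IsNB G (Fin.snoc η z : Fin (k+3) → V) ↔
      IsNB G η ∧ G.Adj (η (Fin.last (k+1))) z ∧ η ⟨k, by omega⟩ ≠ z := by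
  have hlast : (Fin.last (k+1) : Fin (k+2)) = ⟨k+1, by omega⟩ := rfl
  rw [isNB_iff, isNB_iff, hlast]
  constructor
  · rintro ⟨h1, h2⟩
    refine ⟨⟨fun i h => ?_, fun i h => ?_⟩, ?_, ?_⟩
    · have := h1 i (by omega)
      rwa [snoc_mk_lt (h2 := by omega), snoc_mk_lt (h2 := by omega)] at this
    · have := h2 i (by omega)
      rwa [snoc_mk_lt (h2 := by omega), snoc_mk_lt (h2 := by omega)] at this
    · have := h1 (k+1) (by omega)
      rwa [snoc_mk_lt (h2 := by omega), snoc_mk_last] at this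
    · have := h2 k (by omega)
      rwa [snoc_mk_lt (h2 := by omega), snoc_mk_last] at this
  · rintro ⟨⟨h1, h2⟩, ha, hn⟩
    constructor
    · intro i h
      rcases Nat.lt_or_ge (i+1) (k+2) with hc | hc
      · rw [snoc_mk_lt (h2 := by omega), snoc_mk_lt (h2 := by omega)]
        exact h1 i (by omega)
      · have hi : i = k + 1 := by omega
        subst hi
        rw [snoc_mk_lt (h2 := by omega), snoc_mk_last]
        exact ha
    · intro i h
      rcases Nat.lt_or_ge (i+2) (k+2) with hc | hc
      · rw [snoc_mk_lt (h2 := by omega), snoc_mk_lt (h2 := by omega)]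
        exact h2 i (by omega)
      · have hi : i = k := by omega
        subst hi
        rw [snoc_mk_lt (h2 := by omega), snoc_mk_last]
        exact hn

variable [Fintype V]

lemma sum_nb_cons {k : ℕ} (F : (Fin (k+3) → V) → ℂ) :
    ∑ θ ∈ nbFinset G (k+2), F θ
      = ∑ ω ∈ nbFinset G (k+1), ∑ y : V,
          if G.Adj y (ω 0) ∧ y ≠ ω 1 then F (Fin.cons y ω) else 0 := by
  have key : ∀ (ω : Fin (k+2) → V) (y : V),
      (if IsNB G (Fin.cons y ω : Fin (k+3) → V) then F (Fin.cons y ω) else 0)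
        = (if IsNB G ω then (if G.Adj y (ω 0) ∧ y ≠ ω 1 then F (Fin.cons y ω) else 0) else 0) := by
    intro ω y
    by_cases h1 : IsNB G ω <;> by_cases h2 : G.Adj y (ω 0) ∧ y ≠ ω 1 <;>
      simp [isNB_cons, h1, h2]
  rw [nbFinset, nbFinset, Finset.sum_filter, Finset.sum_filter]
  rw [← Equiv.sum_comp (Fin.consEquiv (fun _ : Fin (k+3) => V))
    (fun θ => if IsNB G θ then F θ else 0)]
  rw [Fintype.sum_prod_type]
  have he : ∀ (y : V) (ω : Fin (k+2) → V),
      (Fin.consEquiv (fun _ : Fin (k+3) => V)) (y, ω) = Fin.cons y ω := fun _ _ => rfl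
  simp only [he]
  rw [Finset.sum_comm]
  refine Finset.sum_congr rfl fun ω _ => ?_
  rw [Finset.sum_congr rfl fun y _ => key ω y]
  by_cases h1 : IsNB G ω <;> simp [h1]

def snocEquiv (V : Type) (k : ℕ) : ((Fin (k+2) → V) × V) ≃ (Fin (k+3) → V) where
  toFun p := Fin.snoc p.1 p.2
  invFun θ := (Fin.init θ, θ (Fin.last (k+2)))
  left_inv p := by simp [Fin.init_snoc, Fin.snoc_last]
  right_inv θ := by simp [Fin.snoc_init_self]

lemma sum_nb_snoc {k : ℕ} (F : (Fin (k+3) → V) → ℂ) :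
    ∑ θ ∈ nbFinset G (k+2), F θ
      = ∑ η ∈ nbFinset G (k+1), ∑ z : V,
          if G.Adj (η (Fin.last (k+1))) z ∧ η ⟨k, by omega⟩ ≠ z then F (Fin.snoc η z) else 0 := by
  have key : ∀ (η : Fin (k+2) → V) (z : V),
      (if IsNB G (Fin.snoc η z : Fin (k+3) → V) then F (Fin.snoc η z) else 0)
        = (if IsNB G η then
            (if G.Adj (η (Fin.last (k+1))) z ∧ η ⟨k, by omega⟩ ≠ z then F (Fin.snoc η z) else 0)
          else 0) := by
    intro η z
    by_cases h1 : IsNB G η <;> by_cases h2 : G.Adj (η (Fin.last (k+1))) z ∧ η ⟨k, by omega⟩ ≠ z <;>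
      simp [isNB_snoc, h1, h2]
  rw [nbFinset, nbFinset, Finset.sum_filter, Finset.sum_filter]
  rw [← Equiv.sum_comp (snocEquiv V k) (fun θ => if IsNB G θ then F θ else 0)]
  rw [Fintype.sum_prod_type]
  have he : ∀ (η : Fin (k+2) → V) (z : V), snocEquiv V k (η, z) = Fin.snoc η z :=
    fun _ _ => rfl
  simp only [he]
  refine Finset.sum_congr rfl fun η _ => ?_
  rw [Finset.sum_congr rfl fun z _ => key η z]
  by_cases h1 : IsNB G η <;> simp [h1]

end Comb

/-- Lemma 8 (ii) of the paper: for `K ∈ H_m`, `m = m₀ + 1 ≥ 1`,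
`⟨f*, K̂_B f⟩_{ℓ²(B)} = ⟨ψ, ((1-S)K)^_G ψ⟩_{ℓ²(V)} + ε ⟨ψ, (∇*K)^_G ψ⟩_{ℓ²(V)}`,
where `∇* : H_m → H_{m-1}` is the adjoint of `∇ : H_{m-1} → H_m` (hypothesized through the
adjoint relation for the `H`-inner products, conjugate-linear in the first argument),
`f(x,y) = ψ(y) - ε ψ(x)` and `f*(x,y) = ψ(x) - ε ψ(y)`. -/
theorem nb_pairing_formula_general
    (q : ℕ) (hq : 2 ≤ q)
    (V : Type) [Fintype V] (G : SimpleGraph V)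
    (hconn : G.Connected) (hreg : RegularOfDegree G (q + 1))
    (ψ : V → ℝ) (lam s : ℝ)
    (heig : ∀ x : V, (∑ y : V, if G.Adj x y then ψ y else 0) = lam * ψ x)
    (hlam₁ : -(2 * Real.sqrt q) < lam) (hlam₂ : lam < 2 * Real.sqrt q)
    (hs : lam = 2 * Real.sqrt q * Real.cos (s * Real.log q))
    (m₀ : ℕ)
    (Dstar : ((Fin (m₀ + 2) → V) → ℂ) → ((Fin (m₀ + 1) → V) → ℂ))
    (hadj : ∀ (L : (Fin (m₀ + 2) → V) → ℂ) (L' : (Fin (m₀ + 1) → V) → ℂ),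
      (1 / (Fintype.card V : ℂ)) *
          (∑ ω ∈ nbFinset G m₀, (starRingEnd ℂ) (Dstar L ω) * L' ω)
        = (1 / (Fintype.card V : ℂ)) *
          (∑ η ∈ nbFinset G (m₀ + 1), (starRingEnd ℂ) (L η) * grad m₀ L' η))
    (K : (Fin (m₀ + 2) → V) → ℂ) :
    (∑ ω ∈ nbFinset G (m₀ + 1),
        (starRingEnd ℂ) ((ψ (ω 0) : ℂ) - eps q s * (ψ (ω 1) : ℂ)) * K ω *
          ((ψ (ω (Fin.last (m₀ + 1))) : ℂ) - eps q s * (ψ (ω ⟨m₀, by omega⟩) : ℂ)))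
      = (∑ ω ∈ nbFinset G (m₀ + 1),
            (ψ (ω 0) : ℂ) * (K ω - transferOp G q (m₀ + 1) K ω) *
              (ψ (ω (Fin.last (m₀ + 1))) : ℂ))
        + eps q s * ∑ ω ∈ nbFinset G m₀,
            (ψ (ω 0) : ℂ) * Dstar K ω * (ψ (ω (Fin.last m₀)) : ℂ) := by
  have hq0 : (0:ℝ) < q := by positivity
  have hqc : (q:ℂ) ≠ 0 := by exact_mod_cast hq0.ne'
  set ε := eps q s with hε
  set cε := (starRingEnd ℂ) (eps q s) with hcε
  -- abbreviations for the four basic sums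
  set A := ∑ ω ∈ nbFinset G (m₀+1),
      K ω * (ψ (ω 0) : ℂ) * (ψ (ω (Fin.last (m₀+1))) : ℂ) with hA
  set B := ∑ ω ∈ nbFinset G (m₀+1),
      K ω * (ψ (ω 0) : ℂ) * (ψ (ω ⟨m₀, by omega⟩) : ℂ) with hB
  set C := ∑ ω ∈ nbFinset G (m₀+1),
      K ω * (ψ (ω 1) : ℂ) * (ψ (ω (Fin.last (m₀+1))) : ℂ) with hC
  set D := ∑ ω ∈ nbFinset G (m₀+1),
      K ω * (ψ (ω 1) : ℂ) * (ψ (ω ⟨m₀, by omega⟩) : ℂ) with hD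
  -- eps relations
  have hprod : ε * cε = ((q:ℂ))⁻¹ := eps_mul_conj q hq s
  have hsum : ε + cε = (lam : ℂ) * ((q:ℂ))⁻¹ := by
    rw [eps_add_conj q hq s, hs]
    have hsq : ((Real.sqrt q : ℝ) : ℂ) * ((Real.sqrt q : ℝ) : ℂ) = (q : ℂ) := by
      rw [← Complex.ofReal_mul, Real.mul_self_sqrt hq0.le]
      norm_num
    have hsqn : ((Real.sqrt q : ℝ) : ℂ) ≠ 0 := by
      intro h
      rw [h, zero_mul] at hsq
      exact hqc hsq.symm
    rw [Complex.ofReal_mul, Complex.ofReal_mul, Complex.ofReal_inv]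
    rw [show ((2:ℝ):ℂ) = (2:ℂ) by norm_num]
    rw [← hsq, mul_inv]
    linear_combination (-2 * (Real.cos (s * Real.log q) : ℂ)
      * (((Real.sqrt q : ℝ) : ℂ))⁻¹) * (mul_inv_cancel₀ hsqn)
  -- complex eigenvalue equation with one excluded neighbour
  have heigC : ∀ x : V, (∑ z : V, if G.Adj x z then (ψ z : ℂ) else 0) = (lam : ℂ) * (ψ x : ℂ) := by
    intro x
    have := heig x
    calc (∑ z : V, if G.Adj x z then (ψ z : ℂ) else 0)
        = ((∑ z : V, if G.Adj x z then ψ z else 0 : ℝ) : ℂ) := by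
          push_cast [apply_ite (fun r : ℝ => (r : ℂ))]
          rfl
      _ = (lam : ℂ) * (ψ x : ℂ) := by rw [this]; push_cast; ring
  have heigExcl : ∀ x w : V, G.Adj x w →
      (∑ z : V, if G.Adj x z ∧ w ≠ z then (ψ z : ℂ) else 0)
        = (lam : ℂ) * (ψ x : ℂ) - (ψ w : ℂ) := by
    intro x w hxw
    have split : ∀ z : V, (if G.Adj x z ∧ w ≠ z then (ψ z : ℂ) else 0)
        = (if G.Adj x z then (ψ z : ℂ) else 0)
          - (if z = w then (if G.Adj x z then (ψ z : ℂ) else 0) else 0) := by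
      intro z
      by_cases hz : z = w
      · subst hz
        simp [hxw]
      · have : w ≠ z := fun h => hz h.symm
        by_cases hza : G.Adj x z <;> simp [hz, hza, this]
    rw [Finset.sum_congr rfl fun z _ => split z, Finset.sum_sub_distrib, heigC x,
      Finset.sum_ite_eq' Finset.univ w (fun z => if G.Adj x z then (ψ z : ℂ) else 0)]
    simp [hxw]
  -- the common kernel function on paths of length m₀+2
  set F : (Fin (m₀+3) → V) → ℂ := fun θ =>
    K (fun i => θ i.castSucc) * (ψ (θ 1) : ℂ) * (ψ (θ (Fin.last (m₀+2))) : ℂ) with hFdef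
  have hF : ∀ (y : V) (ω : Fin (m₀+2) → V),
      F (Fin.cons y ω)
      = K (Fin.cons y fun i : Fin (m₀+1) => ω i.castSucc) * (ψ (ω 0) : ℂ)
          * (ψ (ω (Fin.last (m₀+1))) : ℂ) := by
    intro y ω
    have h1 : (fun i : Fin (m₀+2) => (Fin.cons y ω : Fin (m₀+3) → V) i.castSucc)
        = Fin.cons y (fun i : Fin (m₀+1) => ω i.castSucc) := by
      funext i
      refine Fin.cases ?_ (fun j => ?_) i
      · simp
      · rw [← Fin.succ_castSucc, Fin.cons_succ, Fin.cons_succ]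
    have h2 : (Fin.cons y ω : Fin (m₀+3) → V) 1 = ω 0 := by
      rw [show (1 : Fin (m₀+3)) = ⟨0+1, by omega⟩ from Fin.ext (by simp), cons_mk_succ]
      rfl
    have h3 : (Fin.cons y ω : Fin (m₀+3) → V) (Fin.last (m₀+2)) = ω (Fin.last (m₀+1)) := by
      rw [show (Fin.last (m₀+2) : Fin (m₀+3)) = ⟨(m₀+1)+1, by omega⟩ from rfl, cons_mk_succ]
      rfl
    rw [hFdef]
    simp only [h1, h2, h3]
  have hFs : ∀ (η : Fin (m₀+2) → V) (z : V),
      F (Fin.snoc η z) = K η * (ψ (η 1) : ℂ) * (ψ z : ℂ) := by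
    intro η z
    have h1 : (fun i : Fin (m₀+2) => (Fin.snoc η z : Fin (m₀+3) → V) i.castSucc) = η := by
      funext i
      simp
    have h2 : (Fin.snoc η z : Fin (m₀+3) → V) 1 = η 1 := by
      rw [show (1 : Fin (m₀+3)) = ⟨1, by omega⟩ from Fin.ext (by simp),
        snoc_mk_lt (h2 := by omega),
        show (⟨1, by omega⟩ : Fin (m₀+2)) = 1 from Fin.ext (by simp)]
    have h3 : (Fin.snoc η z : Fin (m₀+3) → V) (Fin.last (m₀+2)) = z := by simp
    rw [hFdef]
    simp only [h1, h2, h3]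
  -- Step 1: the transfer-operator sum
  have hTleft :
      (∑ ω ∈ nbFinset G (m₀+1),
        (ψ (ω 0) : ℂ) * transferOp G q (m₀+1) K ω * (ψ (ω (Fin.last (m₀+1))) : ℂ))
      = ((q:ℂ))⁻¹ * ∑ θ ∈ nbFinset G (m₀+2), F θ := by
    rw [sum_nb_cons G F, Finset.mul_sum]
    refine Finset.sum_congr rfl fun ω _ => ?_
    have hy : ∀ y : V, (if G.Adj y (ω 0) ∧ y ≠ ω 1 then F (Fin.cons y ω) else 0)
        = (if G.Adj y (ω 0) ∧ y ≠ ω 1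
            then K (Fin.cons y fun i : Fin (m₀+1) => ω i.castSucc) else 0)
            * (ψ (ω 0) : ℂ) * (ψ (ω (Fin.last (m₀+1))) : ℂ) := by
      intro y
      by_cases hP : G.Adj y (ω 0) ∧ y ≠ ω 1
      · rw [if_pos hP, if_pos hP, hF]
      · rw [if_neg hP, if_neg hP, zero_mul, zero_mul]
    rw [Finset.sum_congr rfl fun y _ => hy y, ← Finset.sum_mul, ← Finset.sum_mul,
      transferOp, one_div]
    ring
  have hTright :
      (∑ θ ∈ nbFinset G (m₀+2), F θ) = (lam : ℂ) * C - D := by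
    rw [sum_nb_snoc G F]
    have hstep : ∀ η ∈ nbFinset G (m₀+1),
        (∑ z : V, if G.Adj (η (Fin.last (m₀+1))) z ∧ η ⟨m₀, by omega⟩ ≠ z
            then F (Fin.snoc η z) else 0)
        = K η * (ψ (η 1) : ℂ) *
            ((lam : ℂ) * (ψ (η (Fin.last (m₀+1))) : ℂ) - (ψ (η ⟨m₀, by omega⟩) : ℂ)) := by
      intro η hη
      have hNB : IsNB G η := by
        rw [nbFinset, Finset.mem_filter] at hη
        exact hη.2
      have hadj' : G.Adj (η (Fin.last (m₀+1))) (η ⟨m₀, by omega⟩) := by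
        have := ((isNB_iff G η).1 hNB).1 m₀ (by omega)
        have hl : (Fin.last (m₀+1) : Fin (m₀+2)) = ⟨m₀+1, by omega⟩ := rfl
        rw [hl]
        exact this.symm
      have hz : ∀ z : V, (if G.Adj (η (Fin.last (m₀+1))) z ∧ η ⟨m₀, by omega⟩ ≠ z
            then F (Fin.snoc η z) else 0)
          = K η * (ψ (η 1) : ℂ) *
              (if G.Adj (η (Fin.last (m₀+1))) z ∧ η ⟨m₀, by omega⟩ ≠ z
                then (ψ z : ℂ) else 0) := by
        intro z
        by_cases hP : G.Adj (η (Fin.last (m₀+1))) z ∧ η ⟨m₀, by omega⟩ ≠ z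
        · rw [if_pos hP, if_pos hP, hFs]
        · rw [if_neg hP, if_neg hP, mul_zero]
      rw [Finset.sum_congr rfl fun z _ => hz z, ← Finset.mul_sum,
        heigExcl (η (Fin.last (m₀+1))) (η ⟨m₀, by omega⟩) hadj']
    rw [Finset.sum_congr rfl hstep]
    rw [hC, hD, Finset.mul_sum, ← Finset.sum_sub_distrib]
    refine Finset.sum_congr rfl fun η _ => ?_
    ring
  -- Step 2: the Dstar sum, via the adjointness hypothesis
  have hcard : ((Fintype.card V : ℕ) : ℂ) ≠ 0 := by
    have : Nonempty V := hconn.nonempty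
    have : 0 < Fintype.card V := Fintype.card_pos
    exact_mod_cast this.ne'
  have hDs : (∑ ω ∈ nbFinset G m₀, (ψ (ω 0) : ℂ) * Dstar K ω * (ψ (ω (Fin.last m₀)) : ℂ))
      = C - B := by
    set L' : (Fin (m₀+1) → V) → ℂ := fun ω => (ψ (ω 0) : ℂ) * (ψ (ω (Fin.last m₀)) : ℂ)
      with hL'
    have h := hadj K L'
    have h2 := mul_left_cancel₀ (one_div_ne_zero hcard) h
    have h3 := congrArg (starRingEnd ℂ) h2
    rw [map_sum, map_sum] at h3
    have hterm1 : ∀ ω : Fin (m₀+1) → V,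
        (starRingEnd ℂ) ((starRingEnd ℂ) (Dstar K ω) * L' ω)
          = (ψ (ω 0) : ℂ) * Dstar K ω * (ψ (ω (Fin.last m₀)) : ℂ) := by
      intro ω
      rw [map_mul, Complex.conj_conj, hL']
      simp only [map_mul, Complex.conj_ofReal]
      ring
    have hgrad : ∀ η : Fin (m₀+2) → V,
        grad m₀ L' η = (ψ (η 1) : ℂ) * (ψ (η (Fin.last (m₀+1))) : ℂ)
          - (ψ (η 0) : ℂ) * (ψ (η ⟨m₀, by omega⟩) : ℂ) := by
      intro η
      simp only [grad, hL']
      have e1 : (0 : Fin (m₀+1)).succ = (1 : Fin (m₀+2)) := Fin.ext (by simp)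
      have e2 : (Fin.last m₀).succ = Fin.last (m₀+1) := Fin.succ_last m₀
      have e3 : (0 : Fin (m₀+1)).castSucc = (0 : Fin (m₀+2)) := Fin.castSucc_zero
      have e4 : (Fin.last m₀).castSucc = (⟨m₀, by omega⟩ : Fin (m₀+2)) := rfl
      rw [e1, e2, e3, e4]
    have hterm2 : ∀ η : Fin (m₀+2) → V,
        (starRingEnd ℂ) ((starRingEnd ℂ) (K η) * grad m₀ L' η)
          = K η * ((ψ (η 1) : ℂ) * (ψ (η (Fin.last (m₀+1))) : ℂ)
              - (ψ (η 0) : ℂ) * (ψ (η ⟨m₀, by omega⟩) : ℂ)) := by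
      intro η
      rw [map_mul, Complex.conj_conj, hgrad η]
      simp only [map_sub, map_mul, Complex.conj_ofReal]
    rw [Finset.sum_congr rfl fun ω _ => hterm1 ω,
      Finset.sum_congr rfl fun η _ => hterm2 η] at h3
    rw [h3, hC, hB, ← Finset.sum_sub_distrib]
    refine Finset.sum_congr rfl fun η _ => ?_
    ring
  -- Step 3: expand the left-hand side
  have hLHS : (∑ ω ∈ nbFinset G (m₀ + 1),
        (starRingEnd ℂ) ((ψ (ω 0) : ℂ) - ε * (ψ (ω 1) : ℂ)) * K ω *
          ((ψ (ω (Fin.last (m₀ + 1))) : ℂ) - ε * (ψ (ω ⟨m₀, by omega⟩) : ℂ)))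
      = A - ε * B - cε * C + (ε * cε) * D := by
    rw [hA, hB, hC, hD, Finset.mul_sum, Finset.mul_sum, Finset.mul_sum,
      ← Finset.sum_sub_distrib, ← Finset.sum_sub_distrib, ← Finset.sum_add_distrib]
    refine Finset.sum_congr rfl fun ω _ => ?_
    rw [map_sub, map_mul, Complex.conj_ofReal, Complex.conj_ofReal, ← hcε]
    ring
  -- Step 4: expand the right-hand side
  have hRHS1 : (∑ ω ∈ nbFinset G (m₀ + 1),
        (ψ (ω 0) : ℂ) * (K ω - transferOp G q (m₀ + 1) K ω) *
          (ψ (ω (Fin.last (m₀ + 1))) : ℂ))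
      = A - ((q:ℂ))⁻¹ * ((lam : ℂ) * C - D) := by
    rw [← hTright, ← hTleft, hA, ← Finset.sum_sub_distrib]
    refine Finset.sum_congr rfl fun ω _ => ?_
    ring
  rw [hLHS, hRHS1, hDs]
  linear_combination D * hprod - C * hsum

end
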